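/- arXiv:1611.02026 — 2 statements merged into one kernel-verified Lean document; each statement's English description precedes it below -/
import Mathlib

section
/- Let (ℬ, ‖·‖_L) be the Banach space of measurable functions φ on D̄ with ‖φ‖_L = sup |φ(t,s,x,y)|/(1+‖s‖₁) < ∞. Suppose an operator A on ℬ satisfies |Aφ₁ − Aφ₂|(t,s,x,y) ≤ ∫₀^{T−t} w(v; t,x,y) · ‖φ₁−φ₂‖_L · (1 + ‖s‖₁ e^{r v}) e^{−r v} dv where r ≥ 0, w(·;t,x,y) ≥ 0, and sup_{(t,x,y)} ∫₀^{T−t} w(v;t,x,y) dv < 1. Then A is a contraction on ℬ and hence has a unique fixed point in ℬ. -/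
open MeasureTheory

/-- Points of the closed domain `D̄ = [0,T] × [0,∞)ⁿ × 𝒳^{n+1} × [0,T]^{n+1}`. -/
def Dbar (𝒳 : Type*) (n : ℕ) (T : ℝ) : Type _ :=
  {q : ℝ × (Fin n → ℝ) × (Fin (n+1) → 𝒳) × (Fin (n+1) → ℝ) //
    q.1 ∈ Set.Icc 0 T ∧ (∀ l, 0 ≤ q.2.1 l) ∧ ∀ l, q.2.2.2 l ∈ Set.Icc 0 T}

instance (𝒳 : Type*) [MeasurableSpace 𝒳] (n : ℕ) (T : ℝ) : MeasurableSpace (Dbar 𝒳 n T) :=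
  Subtype.instMeasurableSpace

/-- The weighted sup-norm `‖φ‖_L = sup |φ(t,s,x,y)|/(1+‖s‖₁)` (valued in `ℝ≥0∞`). -/
noncomputable def normL {𝒳 : Type*} {n : ℕ} {T : ℝ} (φ : Dbar 𝒳 n T → ℝ) : ENNReal :=
  ⨆ p : Dbar 𝒳 n T, ENNReal.ofReal (|φ p| / (1 + ∑ l, p.val.2.1 l))

/-- The Banach space `ℬ` of measurable functions on `D̄` with finite weighted sup-norm. -/
def spaceB (𝒳 : Type*) [MeasurableSpace 𝒳] (n : ℕ) (T : ℝ) : Set (Dbar 𝒳 n T → ℝ) :=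
  {φ | Measurable φ ∧ normL φ < ⊤}

/-!
Dividing by the weight `ρ = 1 + ‖s‖₁` turns `‖φ₁ − φ₂‖_L` into the uniform distance of `φ₁/ρ` and
`φ₂/ρ`, so `ℬ` becomes a closed subset of the complete space `D̄ →ᵤ ℝ`: measurability survives
pointwise limits, and finiteness of the norm is the ball of radius `∞` about `0`, which is closed.
The kernel estimate gives `‖Aφ₁ − Aφ₂‖_L ≤ J ‖φ₁ − φ₂‖_L` because
`(1 + ‖s‖₁ e^{rv}) e^{−rv} = e^{−rv} + ‖s‖₁ ≤ 1 + ‖s‖₁` for `r, v ≥ 0`, and the Banach fixed point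
theorem applies.
-/
open Set Function
open scoped ENNReal NNReal UniformConvergence

section WeightedSup

variable {α : Type*} (ρ : α → ℝ)

noncomputable def weightedNorm (φ : α → ℝ) : ℝ≥0∞ :=
  ⨆ p, ENNReal.ofReal (|φ p| / ρ p)

def weightedSpace [MeasurableSpace α] : Set (α → ℝ) :=
  {φ | Measurable φ ∧ weightedNorm ρ φ < ⊤}

noncomputable def divWeight (φ : α → ℝ) : α →ᵤ ℝ :=
  UniformFun.ofFun fun p => φ p / ρ p

def mulWeight (g : α →ᵤ ℝ) : α → ℝ :=
  fun p => UniformFun.toFun g p * ρ p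

variable {ρ}

lemma mulWeight_divWeight (hρ : ∀ p, 0 < ρ p) (φ : α → ℝ) :
    mulWeight ρ (divWeight ρ φ) = φ :=
  funext fun p => div_mul_cancel₀ (φ p) (hρ p).ne'

lemma divWeight_mulWeight (hρ : ∀ p, 0 < ρ p) (g : α →ᵤ ℝ) :
    divWeight ρ (mulWeight ρ g) = g :=
  funext fun p => mul_div_cancel_right₀ (UniformFun.toFun g p) (hρ p).ne'

lemma edist_divWeight (hρ : ∀ p, 0 < ρ p) (φ ψ : α → ℝ) :
    edist (divWeight ρ φ) (divWeight ρ ψ) = weightedNorm ρ (fun p => φ p - ψ p) := by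
  refine iSup_congr fun p => ?_
  simp only [divWeight, UniformFun.toFun_ofFun]
  rw [edist_dist, Real.dist_eq, ← sub_div, abs_div, abs_of_pos (hρ p)]

lemma weightedNorm_le_ofReal (hρ : ∀ p, 0 < ρ p) {f : α → ℝ} {C : ℝ}
    (h : ∀ p, |f p| ≤ C * ρ p) : weightedNorm ρ f ≤ ENNReal.ofReal C :=
  iSup_le fun p => ENNReal.ofReal_le_ofReal ((div_le_iff₀ (hρ p)).mpr (h p))

variable [MeasurableSpace α]

lemma zero_mem_weightedSpace : (0 : α → ℝ) ∈ weightedSpace ρ :=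
  ⟨measurable_const, by simp [weightedNorm]⟩

lemma preimage_mulWeight_weightedSpace (hρ : ∀ p, 0 < ρ p) :
    mulWeight ρ ⁻¹' weightedSpace ρ =
      {g | Measurable (mulWeight ρ g)} ∩ Metric.eball (divWeight ρ 0) ⊤ := by
  ext g
  have hnorm : weightedNorm ρ (mulWeight ρ g) = edist g (divWeight ρ 0) := by
    conv_rhs => rw [← divWeight_mulWeight hρ g]
    simp only [edist_divWeight hρ, Pi.zero_apply, sub_zero]
  simp [weightedSpace, hnorm, Metric.mem_eball]

lemma isClosed_setOf_measurable_mulWeight :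
    IsClosed {g : α →ᵤ ℝ | Measurable (mulWeight ρ g)} := by
  refine IsSeqClosed.isClosed fun g f hg hlim => ?_
  refine measurable_of_tendsto_metrizable hg (tendsto_pi_nhds.2 fun p => ?_)
  exact (((UniformFun.lipschitzWith_eval p).continuous.tendsto f).comp hlim).mul_const (ρ p)

lemma isComplete_preimage_mulWeight_weightedSpace (hρ : ∀ p, 0 < ρ p) :
    IsComplete (mulWeight ρ ⁻¹' weightedSpace ρ) := by
  rw [preimage_mulWeight_weightedSpace hρ]
  exact (isClosed_setOf_measurable_mulWeight.inter Metric.isClosed_eball_top).isComplete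

lemma edist_ne_top_of_mulWeight_mem (hρ : ∀ p, 0 < ρ p) {g h : α →ᵤ ℝ}
    (hg : mulWeight ρ g ∈ weightedSpace ρ) (hh : mulWeight ρ h ∈ weightedSpace ρ) :
    edist g h ≠ ⊤ := by
  rw [← mem_preimage, preimage_mulWeight_weightedSpace hρ] at hg hh
  exact ((edist_triangle_right g h _).trans_lt (ENNReal.add_lt_top.2 ⟨hg.2, hh.2⟩)).ne

lemma weightedNorm_sub_ne_top (hρ : ∀ p, 0 < ρ p) {φ ψ : α → ℝ}
    (hφ : φ ∈ weightedSpace ρ) (hψ : ψ ∈ weightedSpace ρ) :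
    weightedNorm ρ (fun p => φ p - ψ p) ≠ ⊤ := by
  rw [← edist_divWeight hρ]
  rw [← mulWeight_divWeight hρ φ] at hφ
  rw [← mulWeight_divWeight hρ ψ] at hψ
  exact edist_ne_top_of_mulWeight_mem hρ hφ hψ

theorem existsUnique_fixedPoint_of_weightedNorm_le (hρ : ∀ p, 0 < ρ p)
    {A : (α → ℝ) → α → ℝ} (hA : MapsTo A (weightedSpace ρ) (weightedSpace ρ))
    {K : ℝ≥0} (hK : K < 1)
    (hcontr : ∀ φ ∈ weightedSpace ρ, ∀ ψ ∈ weightedSpace ρ,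
      weightedNorm ρ (fun p => A φ p - A ψ p) ≤ K * weightedNorm ρ (fun p => φ p - ψ p)) :
    ∃! φ, φ ∈ weightedSpace ρ ∧ A φ = φ := by
  set s := mulWeight ρ ⁻¹' weightedSpace ρ
  set F : (α →ᵤ ℝ) → α →ᵤ ℝ := fun g => divWeight ρ (A (mulWeight ρ g))
  have hmulF : ∀ g, mulWeight ρ (F g) = A (mulWeight ρ g) := fun g => mulWeight_divWeight hρ _
  have hFs : MapsTo F s s := fun g hg => by
    simpa only [s, mem_preimage, hmulF] using hA hg
  have hF : ContractingWith K (hFs.restrict F s s) := by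
    refine ⟨hK, fun g h => ?_⟩
    simp only [Subtype.edist_eq, MapsTo.val_restrict_apply, F, edist_divWeight hρ]
    rw [← divWeight_mulWeight hρ g.1, ← divWeight_mulWeight hρ h.1, edist_divWeight hρ,
      mulWeight_divWeight hρ, mulWeight_divWeight hρ]
    exact hcontr _ g.2 _ h.2
  have h0 : divWeight ρ 0 ∈ s := by
    simpa only [s, mem_preimage, mulWeight_divWeight hρ] using zero_mem_weightedSpace
  obtain ⟨y, hys, hy, -⟩ := hF.exists_fixedPoint' (isComplete_preimage_mulWeight_weightedSpace hρ)
    hFs h0 (edist_ne_top_of_mulWeight_mem hρ h0 (hFs h0))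
  refine ⟨mulWeight ρ y, ⟨hys, ?_⟩, fun φ ⟨hφ, hAφ⟩ => ?_⟩
  · rw [← hmulF, hy.eq]
  · have hφs : divWeight ρ φ ∈ s := by simpa only [s, mem_preimage, mulWeight_divWeight hρ]
    have hfix : IsFixedPt (hFs.restrict F s s) ⟨divWeight ρ φ, hφs⟩ :=
      Subtype.ext (by simp only [MapsTo.val_restrict_apply, F, mulWeight_divWeight hρ, hAφ])
    have hyfix : IsFixedPt (hFs.restrict F s s) ⟨y, hys⟩ := Subtype.ext hy
    have := (hF.eq_or_edist_eq_top_of_fixedPoints hfix hyfix).resolve_right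
      (edist_ne_top_of_mulWeight_mem hρ hφs hys)
    rw [← mulWeight_divWeight hρ φ]
    exact congrArg (fun g : s => mulWeight ρ g.1) this

end WeightedSup

lemma one_add_mul_exp_mul_exp_neg_le {r v S : ℝ} (hr : 0 ≤ r) (hv : 0 ≤ v) :
    (1 + S * Real.exp (r * v)) * Real.exp (-(r * v)) ≤ 1 + S := by
  rw [add_mul, one_mul, mul_assoc, ← Real.exp_add, add_neg_cancel, Real.exp_zero, mul_one]
  gcongr
  exact Real.exp_le_one_iff.mpr (neg_nonpos.mpr (mul_nonneg hr hv))

lemma integral_mul_one_add_mul_exp_mul_exp_neg_le {w : ℝ → ℝ} {a r c S : ℝ} (ha : 0 ≤ a)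
    (hr : 0 ≤ r) (hc : 0 ≤ c) (hw : ∀ v ∈ Icc 0 a, 0 ≤ w v)
    (hwi : IntervalIntegrable w volume 0 a) :
    ∫ v in (0:ℝ)..a, w v * c * (1 + S * Real.exp (r * v)) * Real.exp (-(r * v))
      ≤ (∫ v in (0:ℝ)..a, w v) * c * (1 + S) := by
  have hcont : Continuous fun v => c * ((1 + S * Real.exp (r * v)) * Real.exp (-(r * v))) := by
    fun_prop
  have hint := hwi.mul_continuousOn hcont.continuousOn
  simp only [← mul_assoc] at hint
  rw [← intervalIntegral.integral_mul_const, ← intervalIntegral.integral_mul_const]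
  refine intervalIntegral.integral_mono_on ha hint ((hwi.mul_const _).mul_const _) fun v hv => ?_
  rw [mul_assoc]
  exact mul_le_mul_of_nonneg_left (one_add_mul_exp_mul_exp_neg_le hr hv.1)
    (mul_nonneg (hw v hv) hc)

def Dbar.weight {𝒳 : Type*} {n : ℕ} {T : ℝ} (p : Dbar 𝒳 n T) : ℝ :=
  1 + ∑ l, p.val.2.1 l

lemma Dbar.weight_pos {𝒳 : Type*} {n : ℕ} {T : ℝ} (p : Dbar 𝒳 n T) : 0 < p.weight :=
  add_pos_of_pos_of_nonneg one_pos (Finset.sum_nonneg fun l _ => p.property.2.1 l)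

lemma normL_eq_weightedNorm {𝒳 : Type*} {n : ℕ} {T : ℝ} (φ : Dbar 𝒳 n T → ℝ) :
    normL φ = weightedNorm Dbar.weight φ :=
  rfl

lemma spaceB_eq_weightedSpace (𝒳 : Type*) [MeasurableSpace 𝒳] (n : ℕ) (T : ℝ) :
    spaceB 𝒳 n T = weightedSpace Dbar.weight :=
  rfl

theorem stmt_9_general {𝒳 : Type*} [MeasurableSpace 𝒳] (n : ℕ) (T r : ℝ) (hr : 0 ≤ r)
    (A : (Dbar 𝒳 n T → ℝ) → (Dbar 𝒳 n T → ℝ))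
    (hA : ∀ φ ∈ spaceB 𝒳 n T, A φ ∈ spaceB 𝒳 n T)
    (w : ℝ → Dbar 𝒳 n T → ℝ)
    (hw : ∀ v p, 0 ≤ w v p)
    (hwint : ∀ p : Dbar 𝒳 n T, IntervalIntegrable (fun v => w v p) volume 0 (T - p.val.1))
    (J : ℝ) (hJ : J < 1)
    (hwJ : ∀ p : Dbar 𝒳 n T, (∫ v in (0:ℝ)..(T - p.val.1), w v p) ≤ J)
    (hbound : ∀ φ₁ ∈ spaceB 𝒳 n T, ∀ φ₂ ∈ spaceB 𝒳 n T, ∀ p : Dbar 𝒳 n T,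
      |A φ₁ p - A φ₂ p|
        ≤ ∫ v in (0:ℝ)..(T - p.val.1),
            w v p * (normL (fun q => φ₁ q - φ₂ q)).toReal
              * (1 + (∑ l, p.val.2.1 l) * Real.exp (r * v)) * Real.exp (-(r * v))) :
    (∀ φ₁ ∈ spaceB 𝒳 n T, ∀ φ₂ ∈ spaceB 𝒳 n T,
        normL (fun q => A φ₁ q - A φ₂ q)
          ≤ ENNReal.ofReal J * normL (fun q => φ₁ q - φ₂ q)) ∧
    (∃! φ, φ ∈ spaceB 𝒳 n T ∧ A φ = φ) := by
  rw [spaceB_eq_weightedSpace] at hA hbound ⊢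
  simp only [normL_eq_weightedNorm] at hbound ⊢
  have hcontr : ∀ φ₁ ∈ weightedSpace Dbar.weight, ∀ φ₂ ∈ weightedSpace Dbar.weight,
      weightedNorm Dbar.weight (fun q => A φ₁ q - A φ₂ q)
        ≤ ENNReal.ofReal J * weightedNorm Dbar.weight (fun q => φ₁ q - φ₂ q) := by
    intro φ₁ h₁ φ₂ h₂
    rw [← ENNReal.ofReal_toReal (weightedNorm_sub_ne_top Dbar.weight_pos h₁ h₂),
      ← ENNReal.ofReal_mul' ENNReal.toReal_nonneg]
    refine weightedNorm_le_ofReal Dbar.weight_pos fun p => (hbound φ₁ h₁ φ₂ h₂ p).trans ?_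
    calc _ ≤ (∫ v in (0:ℝ)..(T - p.val.1), w v p)
            * (weightedNorm Dbar.weight fun q => φ₁ q - φ₂ q).toReal * p.weight :=
          integral_mul_one_add_mul_exp_mul_exp_neg_le (sub_nonneg.mpr p.property.1.2) hr
            ENNReal.toReal_nonneg (fun v _ => hw v p) (hwint p)
      _ ≤ J * (weightedNorm Dbar.weight fun q => φ₁ q - φ₂ q).toReal * p.weight := by
          gcongr
          · exact (Dbar.weight_pos p).le
          · exact hwJ p
  exact ⟨hcontr, existsUnique_fixedPoint_of_weightedNorm_le Dbar.weight_pos hA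
    (Real.toNNReal_lt_one.2 hJ) hcontr⟩

/-- If an operator `A` on `ℬ` satisfies
`|Aφ₁ − Aφ₂|(t,s,x,y) ≤ ∫₀^{T−t} w(v;t,x,y) ‖φ₁−φ₂‖_L (1+‖s‖₁ e^{rv}) e^{−rv} dv`
with `r ≥ 0`, `w ≥ 0` and `sup ∫₀^{T−t} w < 1`, then `A` is a contraction on `ℬ` and has a
unique fixed point in `ℬ`. -/
theorem stmt_9 {𝒳 : Type*} [MeasurableSpace 𝒳] (n : ℕ) (T r : ℝ) (hT : 0 < T) (hr : 0 ≤ r)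
    (A : (Dbar 𝒳 n T → ℝ) → (Dbar 𝒳 n T → ℝ))
    (hA : ∀ φ ∈ spaceB 𝒳 n T, A φ ∈ spaceB 𝒳 n T)
    (w : ℝ → Dbar 𝒳 n T → ℝ)
    (hw : ∀ v p, 0 ≤ w v p)
    (hwint : ∀ p : Dbar 𝒳 n T, IntervalIntegrable (fun v => w v p) volume 0 (T - p.val.1))
    (J : ℝ) (hJ : J < 1)
    (hwJ : ∀ p : Dbar 𝒳 n T, (∫ v in (0:ℝ)..(T - p.val.1), w v p) ≤ J)
    (hbound : ∀ φ₁ ∈ spaceB 𝒳 n T, ∀ φ₂ ∈ spaceB 𝒳 n T, ∀ p : Dbar 𝒳 n T,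
      |A φ₁ p - A φ₂ p|
        ≤ ∫ v in (0:ℝ)..(T - p.val.1),
            w v p * (normL (fun q => φ₁ q - φ₂ q)).toReal
              * (1 + (∑ l, p.val.2.1 l) * Real.exp (r * v)) * Real.exp (-(r * v))) :
    (∀ φ₁ ∈ spaceB 𝒳 n T, ∀ φ₂ ∈ spaceB 𝒳 n T,
        normL (fun q => A φ₁ q - A φ₂ q)
          ≤ ENNReal.ofReal J * normL (fun q => φ₁ q - φ₂ q)) ∧
    (∃! φ, φ ∈ spaceB 𝒳 n T ∧ A φ = φ) :=
  stmt_9_general n T r hr A hA w hw hwint J hJ hwJ hbound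
end

section
/- Let P_l(y) := Ϝ_∞ˡ(y)/∏_m(1 − Fᵐ(yᵐ)) where Ϝ_∞ˡ(y) = ∫₀^∞ ∏_{m≠l}(1 − Fᵐ(s+yᵐ)) fˡ(s+yˡ) ds. Then along the diagonal direction, D_y P_l(y) = (Σ_r f_{τʳ}(0|yʳ)) P_l(y) − f_{τˡ}(0|yˡ), where f_{τʳ}(0|yʳ) := fʳ(yʳ)/(1 − Fʳ(yʳ)). -/
open MeasureTheory Set Filter

/-!
Write `h(s) = ∏_{m ≠ l} (1 - Fᵐ(s + yᵐ)) fˡ(s + yˡ)`. Shifting the integration variable turns the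
numerator at `y + ε` into `∫_{(ε, ∞)} h`, whose derivative at `0` is `-h(0)` by the fundamental
theorem of calculus. The denominator is a product of nonvanishing factors, so its logarithmic
derivative is `-∑_r fʳ(yʳ)/(1 - Fʳ(yʳ))`, and the quotient rule gives the formula, since
`h(0) / ∏_m (1 - Fᵐ(yᵐ)) = fˡ(yˡ)/(1 - Fˡ(yˡ))`.
-/

theorem integrableOn_Ioi_of_hasDerivAt_of_bddAbove {F f : ℝ → ℝ}
    (hF : ∀ x, HasDerivAt F (f x) x) (hf : ∀ x, 0 ≤ f x) (hbdd : BddAbove (range F)) (a : ℝ) :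
    IntegrableOn f (Ioi a) :=
  integrableOn_Ioi_deriv_of_nonneg' (fun x _ => hF x) (fun x _ => hf x)
    (tendsto_atTop_ciSup (monotone_of_hasDerivAt_nonneg hF hf) hbdd)

theorem setIntegral_Ioi_comp_add_right {E : Type*} [NormedAddCommGroup E] [NormedSpace ℝ E]
    (h : ℝ → E) (a c : ℝ) : ∫ s in Ioi a, h (s + c) = ∫ s in Ioi (a + c), h s := by
  rw [← (measurePreserving_add_right volume c).setIntegral_preimage_emb
    (measurableEmbedding_addRight c) h (Ioi (a + c)), preimage_add_const_Ioi, add_sub_cancel_right]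

theorem hasDerivAt_setIntegral_Ioi {E : Type*} [NormedAddCommGroup E] [NormedSpace ℝ E]
    [CompleteSpace E] {h : ℝ → E} (hc : Continuous h)
    (hi : ∀ a, IntegrableOn h (Ioi a)) (x : ℝ) :
    HasDerivAt (fun ε => ∫ s in Ioi ε, h s) (-h x) x := by
  have hsplit : (fun ε => ∫ s in Ioi ε, h s) = fun ε => (∫ s in Ioi 0, h s) - ∫ s in 0..ε, h s := by
    funext ε
    rw [← intervalIntegral.integral_Ioi_sub_Ioi' (hi 0) (hi ε), sub_sub_cancel]
  rw [hsplit, ← zero_sub]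
  exact (hasDerivAt_const x _).sub (hc.integral_hasStrictDerivAt 0 x).hasDerivAt

theorem HasDerivAt.finset_prod_of_ne_zero {ι 𝕜 : Type*} [NontriviallyNormedField 𝕜]
    {s : Finset ι} {g : ι → 𝕜 → 𝕜} {g' : ι → 𝕜} {x : 𝕜}
    (hg : ∀ i ∈ s, HasDerivAt (g i) (g' i) x) (hne : ∀ i ∈ s, g i x ≠ 0) :
    HasDerivAt (fun y => ∏ i ∈ s, g i y) ((∏ i ∈ s, g i x) * ∑ i ∈ s, g' i / g i x) x := by
  classical
  refine (HasDerivAt.fun_finsetProd hg).congr_deriv ?_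
  rw [Finset.mul_sum]
  refine Finset.sum_congr rfl fun i hi => ?_
  rw [← Finset.prod_erase_mul s _ hi, smul_eq_mul]
  field_simp [hne i hi]

theorem norm_prod_one_sub_le_one {ι : Type*} (s : Finset ι) {a : ι → ℝ}
    (h0 : ∀ i ∈ s, 0 ≤ a i) (h1 : ∀ i ∈ s, a i ≤ 1) : ‖∏ i ∈ s, (1 - a i)‖ ≤ 1 := by
  rw [Real.norm_eq_abs, abs_of_nonneg (Finset.prod_nonneg fun i hi => sub_nonneg.2 (h1 i hi))]
  exact Finset.prod_le_one (fun i hi => sub_nonneg.2 (h1 i hi)) fun i hi => sub_le_self _ (h0 i hi)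

section JumpIntegrand

variable {ι : Type*} [Fintype ι] (F f : ι → ℝ → ℝ) (l : ι) (y : ι → ℝ)

def jumpIntegrand [DecidableEq ι] (s : ℝ) : ℝ :=
  (∏ m ∈ Finset.univ.erase l, (1 - F m (s + y m))) * f l (s + y l)

theorem jumpIntegrand_add_const [DecidableEq ι] (ε s : ℝ) :
    jumpIntegrand F f l (fun m => y m + ε) s = jumpIntegrand F f l y (s + ε) := by
  simp only [jumpIntegrand, add_assoc, add_comm ε]

variable {F f}

theorem continuous_jumpIntegrand [DecidableEq ι] (hF : ∀ m, Continuous (F m))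
    (hf : Continuous (f l)) : Continuous (jumpIntegrand F f l y) := by
  unfold jumpIntegrand
  fun_prop

theorem integrableOn_Ioi_jumpIntegrand [DecidableEq ι] (hF : ∀ m, Continuous (F m))
    (hderiv : ∀ x, HasDerivAt (F l) (f l x) x) (hf : ∀ x, 0 ≤ f l x)
    (hF0 : ∀ m x, 0 ≤ F m x) (hF1 : ∀ m x, F m x ≤ 1) (a : ℝ) :
    IntegrableOn (jumpIntegrand F f l y) (Ioi a) :=
  (integrableOn_Ioi_of_hasDerivAt_of_bddAbove (fun x => (hderiv (x + y l)).comp_add_const x (y l))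
      (fun _ => hf _) ⟨1, by rintro _ ⟨x, rfl⟩; exact hF1 l _⟩ a).bdd_mul
    (by fun_prop : Continuous _).aestronglyMeasurable
    (ae_of_all _ fun s => norm_prod_one_sub_le_one _ (fun m _ => hF0 m _) fun m _ => hF1 m _)

theorem jumpIntegrand_zero_div_prod [DecidableEq ι] (hne : ∀ m, 1 - F m (y m) ≠ 0) :
    jumpIntegrand F f l y 0 / ∏ m, (1 - F m (y m)) = f l (y l) / (1 - F l (y l)) := by
  have hP : ∏ m ∈ Finset.univ.erase l, (1 - F m (y m)) ≠ 0 :=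
    Finset.prod_ne_zero_iff.2 fun m _ => hne m
  rw [jumpIntegrand, ← Finset.prod_erase_mul _ _ (Finset.mem_univ l)]
  simp only [zero_add]
  exact mul_div_mul_left _ _ hP

theorem hasDerivAt_prod_one_sub (hderiv : ∀ m x, HasDerivAt (F m) (f m x) x)
    (hne : ∀ m, 1 - F m (y m) ≠ 0) :
    HasDerivAt (fun ε => ∏ m, (1 - F m (y m + ε)))
      ((∏ m, (1 - F m (y m))) * -∑ r, f r (y r) / (1 - F r (y r))) 0 := by
  refine (HasDerivAt.finset_prod_of_ne_zero (x := 0)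
    (fun m _ => ((hderiv m _).comp_const_add (y m) 0).const_sub 1)
    (fun m _ => by rw [add_zero]; exact hne m)).congr_deriv ?_
  simp only [add_zero, neg_div, Finset.sum_neg_distrib]

end JumpIntegrand

/-- For `P_l(y) = Ϝ_∞ˡ(y)/∏_m(1 − Fᵐ(yᵐ))` with
`Ϝ_∞ˡ(y) = ∫₀^∞ ∏_{m≠l}(1 − Fᵐ(s+yᵐ)) fˡ(s+yˡ) ds`, the derivative along the diagonal is
`(∑_r fʳ(yʳ)/(1−Fʳ(yʳ))) P_l(y) − fˡ(yˡ)/(1−Fˡ(yˡ))`. -/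
theorem stmt_18 (n : ℕ) (l : Fin (n+1)) (F f : Fin (n+1) → ℝ → ℝ)
    (hderiv : ∀ m x, HasDerivAt (F m) (f m x) x)
    (hcont : ∀ m, Continuous (f m))
    (hfnn : ∀ m x, 0 ≤ f m x)
    (hF0 : ∀ m x, 0 ≤ F m x) (hF1 : ∀ m x, F m x ≤ 1)
    (y : Fin (n+1) → ℝ) (hFlt : ∀ m, F m (y m) < 1) :
    HasDerivAt
      (fun ε =>
        (∫ s in Set.Ioi (0:ℝ),
            (∏ m ∈ Finset.univ.erase l, (1 - F m (s + (y m + ε)))) * f l (s + (y l + ε)))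
          / ∏ m, (1 - F m (y m + ε)))
      ((∑ r, f r (y r) / (1 - F r (y r)))
          * ((∫ s in Set.Ioi (0:ℝ),
                (∏ m ∈ Finset.univ.erase l, (1 - F m (s + y m))) * f l (s + y l))
              / ∏ m, (1 - F m (y m)))
        - f l (y l) / (1 - F l (y l))) 0 := by
  have hFc : ∀ m, Continuous (F m) := fun m =>
    Differentiable.continuous fun x => (hderiv m x).differentiableAt
  have hne : ∀ m, 1 - F m (y m) ≠ 0 := fun m => sub_ne_zero.2 (hFlt m).ne'
  have hN : HasDerivAt (fun ε => ∫ s in Ioi 0, jumpIntegrand F f l (fun m => y m + ε) s)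
      (-jumpIntegrand F f l y 0) 0 := by
    simp_rw [jumpIntegrand_add_const, setIntegral_Ioi_comp_add_right, zero_add]
    exact hasDerivAt_setIntegral_Ioi (continuous_jumpIntegrand l y hFc (hcont l))
      (integrableOn_Ioi_jumpIntegrand l y hFc (hderiv l) (hfnn l) hF0 hF1) 0
  have hD0 : ∏ m, (1 - F m (y m + 0)) ≠ 0 := by
    simpa only [add_zero] using Finset.prod_ne_zero_iff.2 fun m _ => hne m
  refine (hN.fun_div (hasDerivAt_prod_one_sub y hderiv hne) hD0).congr_deriv ?_
  rw [← jumpIntegrand_zero_div_prod l y hne]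
  simp only [add_zero] at hD0 ⊢
  unfold jumpIntegrand
  field_simp
  ring
end
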